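/- For simply generated trees with superexponential weights (w_{n+1}/w_n → ∞), σ(s) → ∞ in probability: for every fixed k ≥ 1, ν_N(σ(s) = k) → 0 as N → ∞. -/

import Mathlib

open Filter

/-- Rooted planar trees (the tree hanging from the vertex `s` next to the root `r`;
the full tree of the paper with `N` edges corresponds to a `PTree` with `N` vertices,
plus the extra root `r` of degree 1 attached to the root `s` of the `PTree`). -/
inductive PTree : Type where
  | node : List PTree → PTree

namespace PTree

/-- The (ordered) subtrees attached to the root. -/
def children : PTree → List PTree
  | node ts => ts

/-- Number of vertices of the `PTree`, i.e. the number `N` of edges of the paper's tree. -/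
def size : PTree → ℕ
  | node ts => 1 + (ts.attach.map (fun t => size t.1)).sum
decreasing_by simp [PTree.node.sizeOf_spec]; have := List.sizeOf_lt_of_mem t.2; omega

/-- The weight `∏_{v ≠ r} w_{σ(v)}`: every vertex `v ≠ r` has degree `outdeg(v) + 1`. -/
noncomputable def weight (w : ℕ → ℝ) : PTree → ℝ
  | node ts => w (ts.length + 1) * (ts.attach.map (fun t => weight w t.1)).prod
decreasing_by simp [PTree.node.sizeOf_spec]; have := List.sizeOf_lt_of_mem t.2; omega

/-- The number of vertices of outdegree `k`, i.e. the number `X_{k+1}` of vertices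
(other than `r`) of degree `k+1`. -/
def countOutdeg (k : ℕ) : PTree → ℕ
  | node ts => (if ts.length = k then 1 else 0) + (ts.attach.map (fun t => countOutdeg k t.1)).sum
decreasing_by simp [PTree.node.sizeOf_spec]; have := List.sizeOf_lt_of_mem t.2; omega

/-- The maximal outdegree of a vertex of the tree. -/
def maxOutdeg : PTree → ℕ
  | node ts => max ts.length ((ts.attach.map (fun t => maxOutdeg t.1)).foldr max 0)
decreasing_by simp [PTree.node.sizeOf_spec]; have := List.sizeOf_lt_of_mem t.2; omega

/-- Outdegree of the first (leftmost) child `s₁` of `s` (0 if there is none). -/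
def firstChildOutdeg : PTree → ℕ
  | node [] => 0
  | node (t :: _) => t.children.length

lemma size_node (ts : List PTree) : size (node ts) = 1 + (ts.map size).sum := by
  rw [size]; congr 1; simp [List.attach_map_val]

lemma weight_node (w : ℕ → ℝ) (ts : List PTree) :
    weight w (node ts) = w (ts.length + 1) * (ts.map (weight w)).prod := by
  rw [weight]; congr 1; simp [List.attach_map_val]

mutual
def hasBig (M : ℕ) : PTree → Bool
  | .node ts => M ≤ ts.length || hasBigL M ts
def hasBigL (M : ℕ) : List PTree → Bool
  | [] => false
  | t :: ts => hasBig M t || hasBigL M ts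
end
mutual
def boost (M : ℕ) (extra : List PTree) : PTree → PTree
  | .node ts => if M ≤ ts.length then .node (ts ++ extra) else .node (boostL M extra ts)
def boostL (M : ℕ) (extra : List PTree) : List PTree → List PTree
  | [] => []
  | t :: ts => if hasBig M t then boost M extra t :: ts else t :: boostL M extra ts
end
mutual
def unboost (M K : ℕ) : PTree → PTree × List PTree
  | .node ts => if M ≤ ts.length then
      (.node (ts.take (ts.length - K)), (ts.drop (ts.length - K)).dropLast)
    else ((fun p => (PTree.node p.1, p.2)) (unboostL M K ts))
def unboostL (M K : ℕ) : List PTree → List PTree × List PTree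
  | [] => ([], [])
  | t :: ts => if hasBig M t then ((fun p => (p.1 :: ts, p.2)) (unboost M K t))
      else ((fun p => (t :: p.1, p.2)) (unboostL M K ts))
end

lemma boostL_length (M : ℕ) (extra : List PTree) (ts : List PTree) :
    (boostL M extra ts).length = ts.length := by
  induction ts with
  | nil => simp [boostL]
  | cons t ts ih => rw [boostL]; split <;> simp [ih]

mutual
theorem hasBig_boost (M : ℕ) (extra : List PTree) :
    ∀ t, hasBig M t = true → hasBig M (boost M extra t) = true
  | .node ts, h => by
    rw [boost]
    by_cases hM : M ≤ ts.length
    · rw [if_pos hM, hasBig]; simp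
      exact Or.inl (Nat.le_trans hM (by simp))
    · rw [if_neg hM, hasBig]
      simp only [Bool.or_eq_true, decide_eq_true_eq]
      rw [hasBig] at h
      simp only [Bool.or_eq_true, decide_eq_true_eq] at h
      exact Or.inr (hasBigL_boostL M extra ts (h.resolve_left hM))
theorem hasBigL_boostL (M : ℕ) (extra : List PTree) :
    ∀ ts, hasBigL M ts = true → hasBigL M (boostL M extra ts) = true
  | [], h => by simp [hasBigL] at h
  | t :: ts, h => by
    rw [boostL]
    by_cases ht : hasBig M t = true
    · rw [if_pos ht, hasBigL]
      simp [hasBig_boost M extra t ht]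
    · rw [if_neg ht, hasBigL]
      rw [hasBigL] at h
      simp only [Bool.or_eq_true] at h ⊢
      exact Or.inr (hasBigL_boostL M extra ts (h.resolve_left ht))
end

mutual
theorem unboost_boost (M K : ℕ) (extra : List PTree) (hx : extra.length = K) (hK : 1 ≤ K) :
    ∀ t, hasBig M t = true → unboost M K (boost M extra t) = (t, extra.dropLast)
  | .node ts, h => by
    rw [boost]
    by_cases hM : M ≤ ts.length
    · rw [if_pos hM, unboost]
      have hlen : (ts ++ extra).length = ts.length + K := by simp [hx]
      rw [if_pos (by rw [hlen]; omega), hlen]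
      simp only [Nat.add_sub_cancel]
      rw [List.take_left, List.drop_left]
    · rw [if_neg hM, unboost]
      rw [if_neg (by rw [boostL_length]; exact hM)]
      have h' : hasBigL M ts = true := by
        rw [hasBig] at h; simp only [Bool.or_eq_true, decide_eq_true_eq] at h
        exact h.resolve_left hM
      rw [unboostL_boostL M K extra hx hK ts h']
theorem unboostL_boostL (M K : ℕ) (extra : List PTree) (hx : extra.length = K) (hK : 1 ≤ K) :
    ∀ ts, hasBigL M ts = true → unboostL M K (boostL M extra ts) = (ts, extra.dropLast)
  | [], h => by simp [hasBigL] at h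
  | t :: ts, h => by
    rw [boostL]
    by_cases ht : hasBig M t = true
    · rw [if_pos ht, unboostL, if_pos (hasBig_boost M extra t ht),
        unboost_boost M K extra hx hK t ht]
    · rw [if_neg ht, unboostL, if_neg (by simpa using ht)]
      have h' : hasBigL M ts = true := by
        rw [hasBigL] at h; simp only [Bool.or_eq_true] at h
        exact h.resolve_left ht
      rw [unboostL_boostL M K extra hx hK ts h']
end

mutual
theorem weight_nonneg (w : ℕ → ℝ) (hw : ∀ n, 1 ≤ n → 0 ≤ w n) : ∀ t, 0 ≤ weight w t
  | .node ts => by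
    rw [weight_node]
    exact mul_nonneg (hw _ (by omega)) (weight_nonnegL w hw ts)
theorem weight_nonnegL (w : ℕ → ℝ) (hw : ∀ n, 1 ≤ n → 0 ≤ w n) :
    ∀ ts : List PTree, 0 ≤ (ts.map (weight w)).prod
  | [] => by simp
  | t :: ts => by
    rw [List.map_cons, List.prod_cons]
    exact mul_nonneg (weight_nonneg w hw t) (weight_nonnegL w hw ts)
end

mutual
theorem weight_boost (w : ℕ → ℝ) (hw : ∀ n, 1 ≤ n → 0 ≤ w n) (M : ℕ) (extra : List PTree) :
    ∀ t, hasBig M t = true → ∃ D r, M ≤ D ∧ 0 ≤ r ∧ weight w t = w (D + 1) * r ∧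
      weight w (boost M extra t)
        = w (D + extra.length + 1) * ((extra.map (weight w)).prod * r)
  | .node ts, h => by
    rw [boost]
    by_cases hM : M ≤ ts.length
    · refine ⟨ts.length, (ts.map (weight w)).prod, hM, weight_nonnegL w hw ts,
        weight_node w ts, ?_⟩
      rw [if_pos hM, weight_node]
      rw [List.length_append, List.map_append, List.prod_append]
      ring
    · rw [if_neg hM]
      have h' : hasBigL M ts = true := by
        rw [hasBig] at h; simp only [Bool.or_eq_true, decide_eq_true_eq] at h
        exact h.resolve_left hM
      obtain ⟨D, r, hD, hr, e1, e2⟩ := weight_boostL w hw M extra ts h'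
      refine ⟨D, w (ts.length + 1) * r, hD, mul_nonneg (hw _ (by omega)) hr, ?_, ?_⟩
      · rw [weight_node, e1]; ring
      · rw [weight_node, boostL_length, e2]; ring
theorem weight_boostL (w : ℕ → ℝ) (hw : ∀ n, 1 ≤ n → 0 ≤ w n) (M : ℕ) (extra : List PTree) :
    ∀ ts, hasBigL M ts = true → ∃ D r, M ≤ D ∧ 0 ≤ r ∧
      (ts.map (weight w)).prod = w (D + 1) * r ∧
      ((boostL M extra ts).map (weight w)).prod
        = w (D + extra.length + 1) * ((extra.map (weight w)).prod * r)
  | [], h => by simp [hasBigL] at h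
  | t :: ts, h => by
    rw [boostL]
    by_cases ht : hasBig M t = true
    · obtain ⟨D, r, hD, hr, e1, e2⟩ := weight_boost w hw M extra t ht
      refine ⟨D, r * (ts.map (weight w)).prod, hD,
        mul_nonneg hr (weight_nonnegL w hw ts), ?_, ?_⟩
      · rw [List.map_cons, List.prod_cons, e1]; ring
      · rw [if_pos ht, List.map_cons, List.prod_cons, e2]; ring
    · have h' : hasBigL M ts = true := by
        rw [hasBigL] at h; simp only [Bool.or_eq_true] at h
        exact h.resolve_left ht
      obtain ⟨D, r, hD, hr, e1, e2⟩ := weight_boostL w hw M extra ts h'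
      refine ⟨D, weight w t * r, hD, mul_nonneg (weight_nonneg w hw t) hr, ?_, ?_⟩
      · rw [List.map_cons, List.prod_cons, e1]; ring
      · rw [if_neg ht, List.map_cons, List.prod_cons, e2]; ring
end

mutual
theorem size_boost (M : ℕ) (extra : List PTree) :
    ∀ t, hasBig M t = true →
      size (boost M extra t) = size t + (extra.map size).sum
  | .node ts, h => by
    rw [boost]
    by_cases hM : M ≤ ts.length
    · rw [if_pos hM, size_node, size_node, List.map_append, List.sum_append]; ring
    · rw [if_neg hM]
      have h' : hasBigL M ts = true := by
        rw [hasBig] at h; simp only [Bool.or_eq_true, decide_eq_true_eq] at h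
        exact h.resolve_left hM
      rw [size_node, size_node, sizeL_boostL M extra ts h']; ring
theorem sizeL_boostL (M : ℕ) (extra : List PTree) :
    ∀ ts, hasBigL M ts = true →
      ((boostL M extra ts).map size).sum = (ts.map size).sum + (extra.map size).sum
  | [], h => by simp [hasBigL] at h
  | t :: ts, h => by
    rw [boostL]
    by_cases ht : hasBig M t = true
    · rw [if_pos ht, List.map_cons, List.sum_cons, List.map_cons, List.sum_cons,
        size_boost M extra t ht]; ring
    · have h' : hasBigL M ts = true := by
        rw [hasBigL] at h; simp only [Bool.or_eq_true] at h
        exact h.resolve_left ht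
      rw [if_neg ht, List.map_cons, List.sum_cons, List.map_cons, List.sum_cons,
        sizeL_boostL M extra ts h']; ring
end

mutual
theorem weight_le_pow (w : ℕ → ℝ) (hw : ∀ n, 1 ≤ n → 0 ≤ w n) (M : ℕ) (B : ℝ)
    (hB1 : 1 ≤ B) (hB : ∀ j, 1 ≤ j → j ≤ M → w j ≤ B) :
    ∀ t, hasBig M t = false → weight w t ≤ B ^ size t
  | .node ts, h => by
    rw [hasBig] at h
    simp only [Bool.or_eq_false_iff, decide_eq_false_iff_not] at h
    obtain ⟨hM, hL⟩ := h
    rw [weight_node, size_node, pow_add, pow_one]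
    have h1 : w (ts.length + 1) ≤ B := hB _ (by omega) (by omega)
    have h2 : (ts.map (weight w)).prod ≤ B ^ (ts.map size).sum :=
      weightL_le_pow w hw M B hB1 hB ts hL
    exact mul_le_mul h1 h2 (weight_nonnegL w hw ts) (le_trans zero_le_one hB1)
theorem weightL_le_pow (w : ℕ → ℝ) (hw : ∀ n, 1 ≤ n → 0 ≤ w n) (M : ℕ) (B : ℝ)
    (hB1 : 1 ≤ B) (hB : ∀ j, 1 ≤ j → j ≤ M → w j ≤ B) :
    ∀ ts, hasBigL M ts = false → (ts.map (weight w)).prod ≤ B ^ (ts.map size).sum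
  | [], _ => by simp
  | t :: ts, h => by
    rw [hasBigL] at h
    simp only [Bool.or_eq_false_iff] at h
    rw [List.map_cons, List.prod_cons, List.map_cons, List.sum_cons, pow_add]
    exact mul_le_mul (weight_le_pow w hw M B hB1 hB t h.1)
      (weightL_le_pow w hw M B hB1 hB ts h.2)
      (weight_nonnegL w hw ts) (pow_nonneg (le_trans zero_le_one hB1) _)
end

mutual
def encode : PTree → List Bool
  | .node ts => true :: (encodeL ts ++ [false])
def encodeL : List PTree → List Bool
  | [] => []
  | t :: ts => encode t ++ encodeL ts
end

mutual
theorem length_encode : ∀ t, (encode t).length = 2 * size t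
  | .node ts => by
    rw [encode, size_node]
    simp only [List.length_cons, List.length_append, List.length_singleton]
    rw [length_encodeL ts]; simp only [List.length_nil]; ring
theorem length_encodeL : ∀ ts : List PTree, (encodeL ts).length = 2 * (ts.map size).sum
  | [] => by simp [encodeL]
  | t :: ts => by
    rw [encodeL]
    simp only [List.length_append]
    rw [length_encode t, length_encodeL ts, List.map_cons, List.sum_cons]; ring
end

mutual
theorem encode_inj : ∀ t₁ t₂ (l₁ l₂ : List Bool),
    encode t₁ ++ l₁ = encode t₂ ++ l₂ → t₁ = t₂ ∧ l₁ = l₂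
  | .node ts₁, .node ts₂, l₁, l₂ => fun h => by
    rw [encode, encode] at h
    simp only [List.cons_append, List.cons.injEq, List.append_assoc,
      List.singleton_append] at h
    obtain ⟨ts_eq, l_eq⟩ := encodeL_inj ts₁ ts₂ (false :: l₁) (false :: l₂) rfl rfl h.2
    exact ⟨by rw [List.cons.injEq] at l_eq; exact congrArg node ts_eq,
      by rw [List.cons.injEq] at l_eq; exact l_eq.2⟩
theorem encodeL_inj : ∀ (ts₁ ts₂ : List PTree) (l₁ l₂ : List Bool),
    l₁.head? = some false → l₂.head? = some false →
    encodeL ts₁ ++ l₁ = encodeL ts₂ ++ l₂ → ts₁ = ts₂ ∧ l₁ = l₂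
  | [], [], l₁, l₂ => fun _ _ h => ⟨rfl, by simpa [encodeL] using h⟩
  | [], t :: ts, l₁, l₂ => fun h1 _ h => by
    exfalso
    obtain ⟨us⟩ := t
    rw [encodeL, encodeL, List.nil_append, List.append_assoc, encode] at h
    rw [h] at h1
    simp at h1
  | t :: ts, [], l₁, l₂ => fun _ h2 h => by
    exfalso
    obtain ⟨us⟩ := t
    rw [encodeL, encodeL, List.nil_append, List.append_assoc, encode] at h
    rw [← h] at h2
    simp at h2
  | t₁ :: ts₁, t₂ :: ts₂, l₁, l₂ => fun h1 h2 h => by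
    rw [encodeL, encodeL, List.append_assoc, List.append_assoc] at h
    obtain ⟨te, rest⟩ := encode_inj t₁ t₂ _ _ h
    obtain ⟨tse, le⟩ := encodeL_inj ts₁ ts₂ l₁ l₂ h1 h2 rest
    exact ⟨by rw [te, tse], le⟩
end


lemma node_children : ∀ t : PTree, node t.children = t
  | node _ => rfl

private lemma insErase {α : Type*} : ∀ (l : List α) (i : ℕ) (h : i < l.length),
    (l.eraseIdx i).insertIdx i l[i] = l
  | _ :: _, 0, _ => by simp
  | a :: l, i + 1, h => by
    simp only [List.eraseIdx_cons_succ, List.getElem_cons_succ, List.insertIdx_succ_cons]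
    rw [insErase l i (by simpa using h)]

private lemma prodErase (f : PTree → ℝ) : ∀ (l : List PTree) (i : ℕ) (h : i < l.length),
    (l.map f).prod = f l[i] * ((l.eraseIdx i).map f).prod
  | _ :: _, 0, _ => by simp
  | a :: l, i + 1, h => by
    simp only [List.eraseIdx_cons_succ, List.getElem_cons_succ, List.map_cons, List.prod_cons]
    rw [prodErase f l i (by simpa using h)]; ring

private lemma sumErase (f : PTree → ℕ) : ∀ (l : List PTree) (i : ℕ) (h : i < l.length),
    (l.map f).sum = f l[i] + ((l.eraseIdx i).map f).sum
  | _ :: _, 0, _ => by simp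
  | a :: l, i + 1, h => by
    simp only [List.eraseIdx_cons_succ, List.getElem_cons_succ, List.map_cons, List.sum_cons]
    rw [sumErase f l i (by simpa using h)]; ring

lemma hasBigL_iff (M : ℕ) : ∀ ts : List PTree,
    hasBigL M ts = true ↔ ∃ t ∈ ts, hasBig M t = true
  | [] => by simp [hasBigL]
  | t :: ts => by
    rw [hasBigL, Bool.or_eq_true, hasBigL_iff M ts]
    simp

/-- The surgery map. -/
def phi (M : ℕ) (t : PTree) : PTree :=
  boost M (t.children.eraseIdx (t.children.findIdx (hasBig M)) ++ [node []])
    (t.children.getD (t.children.findIdx (hasBig M)) (node []))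

section Phi
variable {M K : ℕ} {F : List PTree}

lemma hasBigL_of_hasBig (hF : F.length = K) (hKM : K < M)
    (h : hasBig M (node F) = true) : hasBigL M F = true := by
  rw [hasBig] at h
  simp only [Bool.or_eq_true, decide_eq_true_eq] at h
  exact h.resolve_left (by omega)

private lemma idx_lt (hL : hasBigL M F = true) : F.findIdx (hasBig M) < F.length :=
  List.findIdx_lt_length_of_exists ((hasBigL_iff M F).1 hL)

lemma phi_size (hK : 1 ≤ K) (hF : F.length = K) (hKM : K < M)
    (h : hasBig M (node F) = true) : size (phi M (node F)) = size (node F) := by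
  have hL := hasBigL_of_hasBig hF hKM h
  have hi := idx_lt hL
  set i := F.findIdx (hasBig M) with hidef
  have hbig : hasBig M F[i] = true := List.findIdx_getElem (w := hi)
  rw [phi]
  show size (boost M (F.eraseIdx i ++ [node []]) (F.getD i (node []))) = _
  rw [List.getD_eq_getElem F _ hi]
  rw [size_boost M _ _ hbig]
  rw [size_node, sumErase size F i hi]
  have : size (node []) = 1 := by rw [size_node]; simp
  simp only [List.map_append, List.sum_append, List.map_cons, List.sum_cons,
    List.map_nil, List.sum_nil, this]
  omega

lemma phi_weight (w : ℕ → ℝ) (hw : ∀ n, 1 ≤ n → 0 ≤ w n) {C : ℝ} (hC0 : 0 ≤ C)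
    (hC : ∀ D, M ≤ D → C * w (D + 1) ≤ w (D + K + 1))
    (hK : 1 ≤ K) (hF : F.length = K) (hKM : K < M)
    (h : hasBig M (node F) = true) :
    C * (w 1 * weight w (node F)) ≤ w (K + 1) * weight w (phi M (node F)) := by
  have hL := hasBigL_of_hasBig hF hKM h
  have hi := idx_lt hL
  set i := F.findIdx (hasBig M) with hidef
  have hbig : hasBig M F[i] = true := List.findIdx_getElem (w := hi)
  have hlenx : (F.eraseIdx i ++ [node []]).length = K := by
    have := List.length_eraseIdx_add_one hi
    simp only [List.length_append, List.length_cons, List.length_nil]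
    omega
  obtain ⟨D, r, hD, hr, e1, e2⟩ :=
    weight_boost w hw M (F.eraseIdx i ++ [node []]) F[i] hbig
  have hphiw : weight w (phi M (node F))
      = w (D + K + 1) * (((F.eraseIdx i).map (weight w)).prod * w 1 * r) := by
    rw [phi]
    show weight w (boost M (F.eraseIdx i ++ [node []]) (F.getD i (node []))) = _
    rw [List.getD_eq_getElem F _ hi, e2, hlenx]
    have : weight w (node []) = w 1 := by rw [weight_node]; simp
    rw [List.map_append, List.prod_append]
    simp only [List.map_cons, List.map_nil, List.prod_cons, List.prod_nil, this]
    ring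
  have hwF : weight w (node F)
      = w (K + 1) * (w (D + 1) * r * ((F.eraseIdx i).map (weight w)).prod) := by
    rw [weight_node, hF, prodErase (weight w) F i hi, e1]
  have hP : 0 ≤ ((F.eraseIdx i).map (weight w)).prod := weight_nonnegL w hw _
  have key := mul_le_mul_of_nonneg_right (hC D hD)
    (mul_nonneg (mul_nonneg (hw 1 le_rfl) (hw (K + 1) (by omega))) (mul_nonneg hP hr))
  calc C * (w 1 * weight w (node F))
      = C * w (D + 1) * (w 1 * w (K + 1) * (((F.eraseIdx i).map (weight w)).prod * r)) := by
        rw [hwF]; ring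
    _ ≤ w (D + K + 1) * (w 1 * w (K + 1) * (((F.eraseIdx i).map (weight w)).prod * r)) := key
    _ = w (K + 1) * weight w (phi M (node F)) := by rw [hphiw]; ring

lemma phi_leftInv (hK : 1 ≤ K) (hF : F.length = K) (hKM : K < M)
    (h : hasBig M (node F) = true) :
    node (((unboost M K (phi M (node F))).2).insertIdx (F.findIdx (hasBig M))
      (unboost M K (phi M (node F))).1) = node F := by
  have hL := hasBigL_of_hasBig hF hKM h
  have hi := idx_lt hL
  set i := F.findIdx (hasBig M) with hidef
  have hbig : hasBig M F[i] = true := List.findIdx_getElem (w := hi)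
  have hlenx : (F.eraseIdx i ++ [node []]).length = K := by
    have := List.length_eraseIdx_add_one hi
    simp only [List.length_append, List.length_cons, List.length_nil]
    omega
  have hrt := unboost_boost M K (F.eraseIdx i ++ [node []]) hlenx hK F[i] hbig
  rw [phi]
  show node ((unboost M K (boost M (F.eraseIdx i ++ [node []]) (F.getD i (node [])))).2.insertIdx i
      (unboost M K (boost M (F.eraseIdx i ++ [node []]) (F.getD i (node [])))).1) = node F
  rw [List.getD_eq_getElem F _ hi, hrt]
  simp only [List.dropLast_concat]
  rw [insErase F i hi]

end Phi


lemma encode_injective : Function.Injective encode := fun t₁ t₂ h =>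
  (encode_inj t₁ t₂ [] [] (by simpa using h)).1

lemma finite_size (N : ℕ) : {t : PTree | t.size = N}.Finite := by
  apply Set.Finite.of_finite_image (f := encode)
  · apply (List.finite_length_eq Bool (2 * N)).subset
    rintro _ ⟨t, ht, rfl⟩
    simp only [Set.mem_setOf_eq] at ht ⊢
    rw [length_encode, ht]
  · exact encode_injective.injOn

/-- Finset of trees of a given size. -/
noncomputable def sizeFinset (N : ℕ) : Finset PTree := (finite_size N).toFinset

lemma mem_sizeFinset {N : ℕ} {t : PTree} : t ∈ sizeFinset N ↔ t.size = N := by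
  rw [sizeFinset, Set.Finite.mem_toFinset, Set.mem_setOf_eq]

lemma card_sizeFinset (N : ℕ) : (sizeFinset N).card ≤ 2 ^ (2 * N) := by
  have h : (sizeFinset N).card ≤ Fintype.card (Fin (2 * N) → Bool) := by
    apply Finset.card_le_card_of_injOn (fun t => (fun i : Fin (2 * N) => (encode t).getD i.val false))
    · intro x _; exact Finset.mem_univ _
    · intro a ha b hb hab
      apply encode_injective
      have la : (encode a).length = 2 * N := by rw [length_encode, mem_sizeFinset.1 ha]
      have lb : (encode b).length = 2 * N := by rw [length_encode, mem_sizeFinset.1 hb]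
      apply List.ext_getElem (by rw [la, lb])
      intro i h1 h2
      have := congrFun hab ⟨i, by omega⟩
      simp only at this
      rwa [List.getD_eq_getElem _ _ (by omega : (i:ℕ) < a.encode.length),
        List.getD_eq_getElem _ _ (by omega : (i:ℕ) < b.encode.length)] at this
  simpa [Fintype.card_fun, pow_mul] using h

/-- star tree -/
def star (N : ℕ) : PTree := node (List.replicate (N - 1) (node []))

lemma size_star {N : ℕ} (h : 1 ≤ N) : (star N).size = N := by
  rw [star, size_node, List.map_replicate]
  have : size (node []) = 1 := by rw [size_node]; simp
  rw [this, List.sum_replicate, smul_eq_mul, mul_one]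
  omega

lemma weight_star (w : ℕ → ℝ) {N : ℕ} (h : 1 ≤ N) :
    weight w (star N) = w N * w 1 ^ (N - 1) := by
  rw [star, weight_node, List.map_replicate]
  have : weight w (node []) = w 1 := by rw [weight_node]; simp
  rw [this, List.prod_replicate, List.length_replicate]
  congr 2
  omega


end PTree

/-- The partition function `Z_N = Σ_{τ ∈ Γ_N} ∏_{v ∈ V(τ)∖{r}} w_{σ(v)}`. -/
noncomputable def Zfun (w : ℕ → ℝ) (N : ℕ) : ℝ :=
  ∑' t : {t : PTree // t.size = N}, t.1.weight w

/-- `ν_N(P)`: probability of the event `P` under the simply generated measure `ν_N`. -/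
noncomputable def nu (w : ℕ → ℝ) (N : ℕ) (P : PTree → Prop) : ℝ :=
  (∑' t : {t : PTree // t.size = N ∧ P t}, t.1.weight w) / Zfun w N

open PTree

lemma tsum_pred_eq (w : ℕ → ℝ) (N : ℕ) (Q : PTree → Prop) [DecidablePred Q] :
    (∑' t : {t : PTree // t.size = N ∧ Q t}, t.1.weight w)
      = ∑ t ∈ (sizeFinset N).filter (fun t => Q t), t.weight w := by
  have h1 : ∀ (t : PTree), t ∉ (sizeFinset N).filter (fun t => Q t) →
      Set.indicator {t : PTree | t.size = N ∧ Q t} (fun t => t.weight w) t = 0 := by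
    intro t ht
    apply Set.indicator_of_notMem
    intro hmem
    exact ht (Finset.mem_filter.2 ⟨mem_sizeFinset.2 hmem.1, hmem.2⟩)
  calc (∑' t : {t : PTree // t.size = N ∧ Q t}, t.1.weight w)
      = ∑' (t : ↥{t : PTree | t.size = N ∧ Q t}), (fun u : PTree => u.weight w) t.1 := rfl
    _ = ∑' (t : PTree), Set.indicator {t : PTree | t.size = N ∧ Q t}
          (fun u : PTree => u.weight w) t := tsum_subtype _ _
    _ = ∑ t ∈ (sizeFinset N).filter (fun t => Q t), Set.indicator {t : PTree | t.size = N ∧ Q t}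
          (fun u : PTree => u.weight w) t := tsum_eq_sum h1
    _ = ∑ t ∈ (sizeFinset N).filter (fun t => Q t), t.weight w := by
        apply Finset.sum_congr rfl
        intro t ht
        rw [Finset.mem_filter] at ht
        exact Set.indicator_of_mem
          (by simp only [Set.mem_setOf_eq]; exact ⟨mem_sizeFinset.1 ht.1, ht.2⟩) _

lemma Zfun_eq (w : ℕ → ℝ) (N : ℕ) :
    Zfun w N = ∑ t ∈ sizeFinset N, t.weight w := by
  have h1 : ∀ (t : PTree), t ∉ sizeFinset N →
      Set.indicator {t : PTree | t.size = N} (fun t => t.weight w) t = 0 := by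
    intro t ht
    apply Set.indicator_of_notMem
    intro hmem
    exact ht (mem_sizeFinset.2 hmem)
  calc Zfun w N
      = ∑' (t : ↥{t : PTree | t.size = N}), (fun u : PTree => u.weight w) t.1 := rfl
    _ = ∑' (t : PTree), Set.indicator {t : PTree | t.size = N}
          (fun u : PTree => u.weight w) t := tsum_subtype _ _
    _ = ∑ t ∈ sizeFinset N, Set.indicator {t : PTree | t.size = N}
          (fun u : PTree => u.weight w) t := tsum_eq_sum h1
    _ = ∑ t ∈ sizeFinset N, t.weight w := by
        apply Finset.sum_congr rfl
        intro t ht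
        exact Set.indicator_of_mem
          (by simp only [Set.mem_setOf_eq]; exact mem_sizeFinset.1 ht) _

variable {w : ℕ → ℝ}

lemma exists_growth (hw : ∀ n, 1 ≤ n → 0 ≤ w n)
    (hratio : Filter.Tendsto (fun n => w (n + 1) / w n) Filter.atTop Filter.atTop) (c : ℝ) (hc : 1 ≤ c) :
    ∃ M : ℕ, 1 ≤ M ∧ ∀ n, M ≤ n → 0 < w n ∧ c * w n ≤ w (n + 1) := by
  obtain ⟨M₀, hM₀⟩ := Filter.eventually_atTop.1 (hratio.eventually_ge_atTop c)
  refine ⟨max M₀ 1, le_max_right _ _, fun n hn => ?_⟩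
  have h1 : c ≤ w (n + 1) / w n := hM₀ n (le_trans (le_max_left _ _) hn)
  have h0 : 0 ≤ w n := hw n (le_trans (le_max_right _ _) hn)
  have hne : w n ≠ 0 := by
    intro h
    rw [h, div_zero] at h1
    linarith
  have hpos : 0 < w n := lt_of_le_of_ne h0 (Ne.symm hne)
  exact ⟨hpos, (le_div_iff₀ hpos).1 h1⟩

lemma tendsto_w_mul_pow (hw : ∀ n, 1 ≤ n → 0 ≤ w n)
    (hratio : Filter.Tendsto (fun n => w (n + 1) / w n) Filter.atTop Filter.atTop)
    (q : ℝ) (hq : 0 < q) :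
    Filter.Tendsto (fun N => w N * q ^ N) Filter.atTop Filter.atTop := by
  obtain ⟨M, hM1, hM⟩ := exists_growth hw hratio (max 1 (2 / q)) (le_max_left _ _)
  have key : Filter.Tendsto (fun n => w (n + M) * q ^ (n + M)) Filter.atTop Filter.atTop := by
    apply tendsto_atTop_of_geom_le (c := 2)
    · simp only [Nat.zero_add]
      exact mul_pos (hM M le_rfl).1 (pow_pos hq M)
    · norm_num
    · intro n
      have h1 := hM (n + M) (by omega)
      have h2 : (2 / q) * w (n + M) ≤ w (n + M + 1) :=
        le_trans (mul_le_mul_of_nonneg_right (le_max_right 1 (2/q)) (le_of_lt h1.1)) h1.2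
      calc 2 * (w (n + M) * q ^ (n + M))
          = ((2 / q) * w (n + M)) * q ^ (n + M) * q := by
            field_simp
        _ ≤ w (n + M + 1) * q ^ (n + M) * q := by
            apply mul_le_mul_of_nonneg_right _ (le_of_lt hq)
            exact mul_le_mul_of_nonneg_right h2 (le_of_lt (pow_pos hq _))
        _ = w (n + 1 + M) * q ^ (n + 1 + M) := by
            have e1 : n + 1 + M = n + M + 1 := by ring
            rw [e1, pow_succ]
            ring
  exact (Filter.tendsto_add_atTop_iff_nat M).1 key

/-- Lemma: for superexponential weights, `σ(s) → ∞` in probability: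
`ν_N(σ(s) = k) → 0` for each fixed `k ≥ 1` (here `σ(s) = #children(s) + 1`). -/
theorem stmt_16 (w : ℕ → ℝ) (hw : ∀ n, 1 ≤ n → 0 ≤ w n) (h1 : 0 < w 1)
    (h2 : ∃ n, 2 < n ∧ 0 < w n)
    (hratio : Tendsto (fun n => w (n + 1) / w n) atTop atTop) :
    ∀ k : ℕ, 1 ≤ k →
      Tendsto (fun N : ℕ => nu w N (fun t => t.children.length + 1 = k))
        atTop (nhds 0) := by
  intro k hk
  haveI : DecidableEq PTree := Classical.decEq _
  rcases Nat.lt_or_ge k 2 with hk2 | hk2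
  · -- k = 1 : the numerator vanishes for N ≥ 2
    have hk1 : k = 1 := by omega
    subst hk1
    have heq : (fun _ : ℕ => (0 : ℝ)) =ᶠ[atTop]
        (fun N : ℕ => nu w N (fun t => t.children.length + 1 = 1)) := by
      filter_upwards [Filter.eventually_ge_atTop 2] with N hN
      haveI : IsEmpty {t : PTree // t.size = N ∧ t.children.length + 1 = 1} := by
        constructor
        rintro ⟨⟨ts⟩, hsize, hP⟩
        simp only [children] at hP
        have hts : ts = [] := List.length_eq_zero_iff.1 (by omega)
        subst hts
        rw [size_node] at hsize
        simp at hsize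
        omega
      rw [nu, tsum_empty, zero_div]
    exact Filter.Tendsto.congr' heq tendsto_const_nhds
  · set K := k - 1 with hKdef
    have hkK : k = K + 1 := by omega
    have hK1 : 1 ≤ K := by omega
    rw [NormedAddCommGroup.tendsto_nhds_zero]
    intro ε hε
    set C : ℝ := max 1 (4 * K * w k / (w 1 * ε)) with hCdef
    have hC1 : (1 : ℝ) ≤ C := le_max_left _ _
    have hC0 : (0 : ℝ) ≤ C := by linarith
    obtain ⟨M₀, hM₀1, hM₀⟩ := exists_growth hw hratio C hC1
    set M := max M₀ (K + 1) with hMdef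
    have hKM : K < M := by
      have := le_max_right M₀ (K + 1); omega
    have hM₀M : M₀ ≤ M := le_max_left _ _
    -- monotonicity of w above M₀
    have mono : ∀ a b : ℕ, M₀ ≤ a → a ≤ b → w a ≤ w b := by
      intro a b ha hab
      induction b, hab using Nat.le_induction with
      | base => exact le_rfl
      | succ b hab ih =>
        refine le_trans ih ?_
        have h := hM₀ b (by omega)
        nlinarith [h.1, h.2]
    have hC : ∀ D, M ≤ D → C * w (D + 1) ≤ w (D + K + 1) := by
      intro D hD
      have h := (hM₀ (D + 1) (by omega)).2
      refine le_trans h (mono (D + 2) (D + K + 1) (by omega) (by omega))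
    set B : ℝ := 1 + ∑ j ∈ Finset.range (M + 1), |w j| with hBdef
    have hB1 : (1 : ℝ) ≤ B := by
      have : (0:ℝ) ≤ ∑ j ∈ Finset.range (M + 1), |w j| :=
        Finset.sum_nonneg (fun j _ => abs_nonneg _)
      linarith
    have hBpos : (0 : ℝ) < B := by linarith
    have hB : ∀ j, 1 ≤ j → j ≤ M → w j ≤ B := by
      intro j hj1 hjM
      have h1 : w j ≤ |w j| := le_abs_self _
      have h2 : |w j| ≤ ∑ i ∈ Finset.range (M + 1), |w i| :=
        Finset.single_le_sum (fun i _ => abs_nonneg (w i))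
          (Finset.mem_range.2 (by omega))
      linarith
    have hgrow := (tendsto_w_mul_pow hw hratio (w 1 / (4 * B))
      (by positivity)).eventually_ge_atTop (4 * w 1 / ε)
    filter_upwards [hgrow, Filter.eventually_ge_atTop (M + 1)] with N hN1 hN2
    have hN1' : 1 ≤ N := by omega
    have hwN : 0 < w N := (hM₀ N (by omega)).1
    -- partition function
    have hZeq : Zfun w N = ∑ t ∈ sizeFinset N, t.weight w := Zfun_eq w N
    have hwnn : ∀ t ∈ sizeFinset N, 0 ≤ t.weight w :=
      fun t _ => weight_nonneg w hw t
    have hstar_mem : PTree.star N ∈ sizeFinset N := mem_sizeFinset.2 (size_star hN1')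
    have hZstar : w N * w 1 ^ (N - 1) ≤ ∑ t ∈ sizeFinset N, t.weight w := by
      have := Finset.single_le_sum hwnn hstar_mem
      rwa [weight_star w hN1'] at this
    have hZpos : 0 < ∑ t ∈ sizeFinset N, t.weight w :=
      lt_of_lt_of_le (by positivity) hZstar
    set Z : ℝ := ∑ t ∈ sizeFinset N, t.weight w with hZdef
    -- numerator
    have hnum : (∑' t : {t : PTree // t.size = N ∧ t.children.length + 1 = k}, t.1.weight w)
        = ∑ t ∈ (sizeFinset N).filter (fun t => t.children.length + 1 = k), t.weight w :=
      tsum_pred_eq w N _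
    set SP := (sizeFinset N).filter (fun t => t.children.length + 1 = k) with hSPdef
    have hsplit := Finset.sum_filter_add_sum_filter_not SP
      (fun t => hasBig M t = true) (fun t => t.weight w)
    set Abig := ∑ t ∈ SP.filter (fun t => hasBig M t = true), t.weight w with hAbigdef
    set Asmall := ∑ t ∈ SP.filter (fun t => ¬hasBig M t = true), t.weight w with hAsmalldef
    -- facts about members of SP
    have hSPfact : ∀ t ∈ SP, t.size = N ∧ t.children.length = K := by
      intro t ht
      rw [hSPdef, Finset.mem_filter] at ht
      exact ⟨mem_sizeFinset.1 ht.1, by omega⟩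
    -- small part
    have hsmall_le : Asmall ≤ (ε / 4) * Z := by
      have hterm : ∀ t ∈ SP.filter (fun t => ¬hasBig M t = true), t.weight w ≤ B ^ N := by
        intro t ht
        rw [Finset.mem_filter] at ht
        have hsz := (hSPfact t ht.1).1
        have hwle := weight_le_pow w hw M B hB1 hB t (Bool.not_eq_true _ ▸ ht.2)
        rwa [hsz] at hwle
      have hcard : (SP.filter (fun t => ¬hasBig M t = true)).card ≤ 2 ^ (2 * N) := by
        refine le_trans (Finset.card_le_card ?_) (card_sizeFinset N)
        intro t ht
        rw [Finset.mem_filter] at ht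
        rw [hSPdef, Finset.mem_filter] at *
        exact ht.1.1
      have hBN : (0:ℝ) ≤ B ^ N := by positivity
      have h3 : Asmall ≤ (2 ^ (2 * N) : ℕ) • (B ^ N) := by
        refine le_trans (Finset.sum_le_card_nsmul _ _ _ hterm) ?_
        exact nsmul_le_nsmul_left hBN hcard
      rw [nsmul_eq_mul] at h3
      have h4 : ((2 ^ (2 * N) : ℕ) : ℝ) * B ^ N = (4 * B) ^ N := by
        push_cast
        rw [pow_mul, mul_pow]
        norm_num
      rw [h4] at h3
      -- (4B)^N ≤ (ε/4) * (w N * w 1 ^ (N-1))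
      have h5 : (4 * B) ^ N ≤ ε / 4 * (w N * w 1 ^ (N - 1)) := by
        have hBne : ((4 : ℝ) * B) ^ N ≠ 0 := by positivity
        have e1 : (w 1 / (4 * B)) ^ N * (4 * B) ^ N = w 1 ^ N := by
          rw [div_pow, div_mul_cancel₀ _ hBne]
        have e2 : w 1 ^ N = w 1 ^ (N - 1) * w 1 := by
          rw [← pow_succ]
          congr 1
          omega
        have h6 := mul_le_mul_of_nonneg_right hN1 (by positivity : (0:ℝ) ≤ (4 * B) ^ N)
        rw [mul_assoc, e1, e2] at h6
        -- h6 : 4 * w 1 / ε * (4*B)^N ≤ w N * (w 1 ^ (N-1) * w 1)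
        have hεne : ε ≠ 0 := ne_of_gt hε
        have hw1ne : w 1 ≠ 0 := ne_of_gt h1
        have h7 := mul_le_mul_of_nonneg_left h6
          (by positivity : (0:ℝ) ≤ ε / (4 * w 1))
        calc (4 * B) ^ N = ε / (4 * w 1) * (4 * w 1 / ε * (4 * B) ^ N) := by
              field_simp
          _ ≤ ε / (4 * w 1) * (w N * (w 1 ^ (N - 1) * w 1)) := h7
          _ = ε / 4 * (w N * w 1 ^ (N - 1)) := by field_simp
      refine le_trans h3 (le_trans h5 ?_)
      exact mul_le_mul_of_nonneg_left hZstar (by positivity)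
    -- big part
    have hbig_le : Abig ≤ (ε / 4) * Z := by
      set SB := SP.filter (fun t => hasBig M t = true) with hSBdef
      have hSBfact : ∀ t ∈ SB, t.size = N ∧ t.children.length = K ∧ hasBig M t = true := by
        intro t ht
        rw [hSBdef, Finset.mem_filter] at ht
        exact ⟨(hSPfact t ht.1).1, (hSPfact t ht.1).2, ht.2⟩
      -- termwise inequality
      have hterm : ∀ t ∈ SB, C * (w 1 * t.weight w)
          ≤ w (K + 1) * (phi M t).weight w := by
        intro t ht
        obtain ⟨hsz, hlen, hbig⟩ := hSBfact t ht
        have := phi_weight w hw hC0 hC hK1 (F := t.children) hlen hKM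
          (by rw [node_children]; exact hbig)
        rwa [node_children t] at this
      have hsum1 : C * (w 1 * Abig) ≤ w (K + 1) * ∑ t ∈ SB, (phi M t).weight w := by
        rw [hAbigdef, Finset.mul_sum, Finset.mul_sum, Finset.mul_sum]
        exact Finset.sum_le_sum hterm
      -- the boosted sum is at most K * Z
      have hmaps : ∀ t ∈ SB, t.children.findIdx (hasBig M) ∈ Finset.range K := by
        intro t ht
        obtain ⟨hsz, hlen, hbig⟩ := hSBfact t ht
        have hL : hasBigL M t.children = true :=
          hasBigL_of_hasBig hlen hKM (by rw [node_children]; exact hbig)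
        have := List.findIdx_lt_length_of_exists ((hasBigL_iff M t.children).1 hL)
        rw [hlen] at this
        exact Finset.mem_range.2 this
      have hsum2 : ∑ t ∈ SB, (phi M t).weight w ≤ (K : ℝ) * Z := by
        rw [← Finset.sum_fiberwise_of_maps_to hmaps (fun t => (phi M t).weight w)]
        have hfiber : ∀ i ∈ Finset.range K,
            ∑ t ∈ SB.filter (fun t => t.children.findIdx (hasBig M) = i),
              (phi M t).weight w ≤ Z := by
          intro i _
          set Fib := SB.filter (fun t => t.children.findIdx (hasBig M) = i) with hFibdef
          have hinj : ∀ a ∈ Fib, ∀ b ∈ Fib, phi M a = phi M b → a = b := by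
            intro a ha b hb heq
            rw [hFibdef, Finset.mem_filter] at ha hb
            obtain ⟨hsa, hla, hba⟩ := hSBfact a ha.1
            obtain ⟨hsb, hlb, hbb⟩ := hSBfact b hb.1
            have ra := phi_leftInv (M := M) hK1 (F := a.children) hla hKM
              (by rw [node_children]; exact hba)
            have rb := phi_leftInv (M := M) hK1 (F := b.children) hlb hKM
              (by rw [node_children]; exact hbb)
            simp only [node_children] at ra rb
            calc a = node (((unboost M K (phi M a)).2).insertIdx
                    (a.children.findIdx (hasBig M)) (unboost M K (phi M a)).1) := ra.symm
              _ = node (((unboost M K (phi M b)).2).insertIdx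
                    (b.children.findIdx (hasBig M)) (unboost M K (phi M b)).1) := by
                  rw [heq, ha.2, hb.2]
              _ = b := rb
          calc ∑ t ∈ Fib, (phi M t).weight w
              = ∑ T ∈ Fib.image (phi M), T.weight w := (Finset.sum_image hinj).symm
            _ ≤ Z := by
                rw [hZdef]
                apply Finset.sum_le_sum_of_subset_of_nonneg
                · intro T hT
                  rw [Finset.mem_image] at hT
                  obtain ⟨t, ht, rfl⟩ := hT
                  rw [hFibdef, Finset.mem_filter] at ht
                  obtain ⟨hsz, hlen, hbig⟩ := hSBfact t ht.1
                  have hps := phi_size hK1 (F := t.children) hlen hKM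
                    (by rw [node_children]; exact hbig)
                  simp only [node_children] at hps
                  exact mem_sizeFinset.2 (by rw [hps, hsz])
                · intro T _ _
                  exact weight_nonneg w hw T
        calc ∑ i ∈ Finset.range K, ∑ t ∈ SB.filter
              (fun t => t.children.findIdx (hasBig M) = i), (phi M t).weight w
            ≤ ∑ _i ∈ Finset.range K, Z := Finset.sum_le_sum hfiber
          _ = (K : ℝ) * Z := by rw [Finset.sum_const, Finset.card_range, nsmul_eq_mul]
      -- combine
      have hchain : C * (w 1 * Abig) ≤ w k * ((K : ℝ) * Z) := by
        refine le_trans hsum1 ?_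
        rw [← hkK]
        exact mul_le_mul_of_nonneg_left hsum2 (hw k (by omega))
      have hCw : 4 * (K : ℝ) * w k ≤ C * (w 1 * ε) := by
        have hx : 4 * (K : ℝ) * w k / (w 1 * ε) ≤ C := le_max_right _ _
        have := (div_le_iff₀ (by positivity : (0:ℝ) < w 1 * ε)).1 hx
        linarith
      have hAnn : 0 ≤ Abig := Finset.sum_nonneg (fun t _ => weight_nonneg w hw t)
      have hCw1 : (0:ℝ) < C * w 1 := by positivity
      rw [← mul_assoc] at hchain
      have h8 : Abig ≤ w k * ((K : ℝ) * Z) / (C * w 1) :=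
        (le_div_iff₀ hCw1).2 (by linarith [hchain])
      refine le_trans h8 ?_
      rw [div_le_iff₀ hCw1]
      have h9 := mul_le_mul_of_nonneg_right hCw (by positivity : (0:ℝ) ≤ Z / 4)
      calc w k * ((K : ℝ) * Z) = (4 * (K:ℝ) * w k) * (Z / 4) := by ring
        _ ≤ (C * (w 1 * ε)) * (Z / 4) := h9
        _ = ε / 4 * Z * (C * w 1) := by ring
    -- conclusion
    have hnu : nu w N (fun t => t.children.length + 1 = k) = (Abig + Asmall) / Z := by
      rw [nu, hnum, hZeq, ← hsplit]
    rw [hnu]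
    have hnn : 0 ≤ (Abig + Asmall) / Z := by
      apply div_nonneg _ (le_of_lt hZpos)
      have h10 : 0 ≤ Abig := Finset.sum_nonneg (fun t _ => weight_nonneg w hw t)
      have h11 : 0 ≤ Asmall := Finset.sum_nonneg (fun t _ => weight_nonneg w hw t)
      linarith
    rw [Real.norm_eq_abs, abs_of_nonneg hnn]
    rw [div_lt_iff₀ hZpos]
    nlinarith [hsmall_le, hbig_le, hZpos]
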